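/- The discrete Virasoro operators L_j (j ≥ 0), acting on polynomials (or formal power series) in infinitely many variables t_1, t_2, ..., defined by L_j = (1/N²)(2j ∂/∂t_j + Σ_{l=1}^{j-1} l(j-l) ∂²/∂t_{j-l}∂t_l) + Σ_{k≥1} (k+j) t_k ∂/∂t_{k+j}, satisfy the Virasoro commutation relations [L_j, L_l] = (j - l) L_{j+l}. -/

import Mathlib

/-!
Write `L_j = N⁻² A_j + W_j`, where `W_j = Σ_k (k+j) t_k ∂_{k+j}` is the derivation sending
`t_i ↦ i t_{i-j}` and `A_j = 2 α_j + Σ_{a+b=j} α_a α_b` is built from the commuting operators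
`α_a = a ∂_a`. Brackets of derivations are derivations, so `[W_j, W_l] = (j - l) W_{j+l}` and
`[α_a, W_l] = a α_{a+l}` are checked on the generators `t_i`. The `A_j` commute with each other,
and the Leibniz rule for commutators gives `[A_j, W_l] = 2 j α_{j+l} + 2 Σ_{c+d=j+l} (c-l)₊ α_c α_d`.
Since `α_c α_d` is symmetric in `c, d`, the reflection `c ↦ j + l - c` turns `(c-l)₊` into `(j-c)₊`,
and `x₊ - (-x)₊ = x` yields `[A_j, W_l] - [A_l, W_j] = (j - l) A_{j+l}`.
-/

open MvPolynomial

/-- The discrete Virasoro operator `L_j` acting on `ℂ[t_1, t_2, ...]`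
(variables indexed by `ℕ`, with `t_0` unused and `∂_{t_0}` interpreted as `0`):
`L_j = (1/N²)(2j ∂_{t_j} + Σ_{l=1}^{j-1} l(j-l) ∂_{t_{j-l}} ∂_{t_l}) + Σ_{k≥1} (k+j) t_k ∂_{t_{k+j}}`. -/
noncomputable def virasoroL (N : ℂ) (j : ℕ) (P : MvPolynomial ℕ ℂ) : MvPolynomial ℕ ℂ :=
  (1 / N ^ 2) • ((2 * (j : ℂ)) • pderiv j P
      + ∑ l ∈ Finset.Ico 1 j, ((l * (j - l) : ℕ) : ℂ) • pderiv (j - l) (pderiv l P))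
    + ∑ᶠ k : ℕ, if 1 ≤ k then ((k + j : ℕ) : ℂ) • (X k * pderiv (k + j) P) else 0

namespace MvPolynomial

variable {σ R : Type*}

lemma derivation_pderiv_X [CommSemiring R] {A : Type*} [AddCommMonoid A] [Module R A]
    [Module (MvPolynomial σ R) A] (D : Derivation R (MvPolynomial σ R) A) (a i : σ) :
    D (pderiv a (X i)) = 0 := by
  classical
  rw [pderiv_X, Pi.single_apply]
  split_ifs <;> simp

lemma lie_pderiv [CommRing R] (a b : σ) :
    ⁅pderiv (R := R) a, pderiv (R := R) b⁆ = 0 :=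
  derivation_ext fun i => by
    rw [Derivation.commutator_apply, derivation_pderiv_X, derivation_pderiv_X, sub_zero]
    rfl

lemma pderiv_pderiv_comm [CommRing R] (a b : σ) (P : MvPolynomial σ R) :
    pderiv a (pderiv b P) = pderiv b (pderiv a P) :=
  sub_eq_zero.1 <| by rw [← Derivation.commutator_apply, lie_pderiv]; rfl

end MvPolynomial

namespace Virasoro

open Finset

section Combinatorics

variable {K M : Type*} [CommRing K] [AddCommGroup M] [Module K M]

lemma cast_tsub_sub_cast_tsub (a b : ℕ) : ((a - b : ℕ) : K) - ((b - a : ℕ) : K) = a - b := by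
  rcases le_total a b with h | h <;> simp [Nat.sub_eq_zero_of_le h, Nat.cast_sub h]

lemma sum_range_tsub_smul (j l : ℕ) (f : ℕ → M) :
    ∑ c ∈ range (j + l + 1), ((c - l : ℕ) : K) • f c
      = ∑ a ∈ range (j + 1), (a : K) • f (a + l) := by
  rw [show j + l + 1 = l + (j + 1) by omega, sum_range_add]
  have hlow : ∑ c ∈ range l, ((c - l : ℕ) : K) • f c = 0 :=
    sum_eq_zero fun c hc => by simp [Nat.sub_eq_zero_of_le (mem_range.1 hc).le]
  simp [hlow, add_comm l]

lemma sum_range_reflect_smul (m : ℕ) (φ : ℕ → K) (T : ℕ → M)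
    (hT : ∀ c ≤ m, T (m - c) = T c) :
    ∑ c ∈ range (m + 1), φ c • T c = ∑ c ∈ range (m + 1), φ (m - c) • T c := by
  rw [← sum_range_reflect]
  refine sum_congr rfl fun c hc => ?_
  have hc : c ≤ m := Nat.lt_succ_iff.1 (mem_range.1 hc)
  simp [hT c hc]

lemma two_smul_sum_tsub_smul_sub (j l : ℕ) (T : ℕ → M)
    (hT : ∀ c ≤ j + l, T (j + l - c) = T c) :
    (2 : K) • (∑ c ∈ range (j + l + 1), ((c - l : ℕ) : K) • T c
        - ∑ c ∈ range (j + l + 1), ((c - j : ℕ) : K) • T c)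
      = ((j : K) - l) • ∑ c ∈ range (j + l + 1), T c := by
  have hl := sum_range_reflect_smul (K := K) _ (fun c => ((c - l : ℕ) : K)) T hT
  have hj := sum_range_reflect_smul (K := K) _ (fun c => ((c - j : ℕ) : K)) T hT
  simp only [show ∀ c, j + l - c - l = j - c by omega,
    show ∀ c, j + l - c - j = l - c by omega] at hl hj
  have hpointwise : ∑ c ∈ range (j + l + 1), ((j : K) - l) • T c
      = (∑ c ∈ range (j + l + 1), ((c - l : ℕ) : K) • T c
          - ∑ c ∈ range (j + l + 1), ((l - c : ℕ) : K) • T c)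
        + (∑ c ∈ range (j + l + 1), ((j - c : ℕ) : K) • T c
          - ∑ c ∈ range (j + l + 1), ((c - j : ℕ) : K) • T c) := by
    simp only [← sum_sub_distrib, ← sum_add_distrib, ← sub_smul, ← add_smul,
      cast_tsub_sub_cast_tsub]
    refine sum_congr rfl fun c _ => ?_
    congr 1
    ring
  rw [smul_sum, hpointwise]
  linear_combination (norm := module) hl - hj

end Combinatorics

variable (K : Type*) [CommRing K]

local notation "𝔻" => Derivation K (MvPolynomial ℕ K) (MvPolynomial ℕ K)
local notation "𝔼" => Module.End K (MvPolynomial ℕ K)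

noncomputable def scaledPderiv (a : ℕ) : 𝔻 := (a : K) • pderiv a

/-- The vector field `Σ_{k ≥ 1} (k + j) t_k ∂_{t_{k+j}}`. -/
noncomputable def wittDerivation (j : ℕ) : 𝔻 :=
  mkDerivation K fun i => if j < i then (i : K) • X (i - j) else 0

/-- `2 j ∂_j + Σ_{a=1}^{j-1} a (j-a) ∂_a ∂_{j-a}`; the terms `a = 0, j` of the sum vanish because
`scaledPderiv K 0 = 0`. -/
noncomputable def constCoeffPart (j : ℕ) : 𝔼 :=
  (2 : K) • (scaledPderiv K j : 𝔼)
    + ∑ a ∈ range (j + 1), (scaledPderiv K a : 𝔼) * scaledPderiv K (j - a)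

noncomputable def virasoroOp (c : K) (j : ℕ) : 𝔼 := c • constCoeffPart K j + wittDerivation K j

variable {K}

lemma wittDerivation_X (j i : ℕ) :
    wittDerivation K j (X i) = if j < i then (i : K) • X (i - j) else 0 :=
  mkDerivation_X K _ i

lemma commute_scaledPderiv (a b : ℕ) : Commute (scaledPderiv K a : 𝔼) (scaledPderiv K b) :=
  LinearMap.ext fun P => by
    simp only [Module.End.mul_apply, Derivation.coeFn_coe, scaledPderiv, Derivation.smul_apply,
      Derivation.map_smul, pderiv_pderiv_comm a b, smul_comm (a : K)]

lemma lie_scaledPderiv_wittDerivation (a l : ℕ) :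
    ⁅scaledPderiv K a, wittDerivation K l⁆ = (a : K) • scaledPderiv K (a + l) := by
  refine derivation_ext fun i => ?_
  simp only [Derivation.commutator_apply, scaledPderiv, Derivation.smul_apply, wittDerivation_X,
    Derivation.map_smul, derivation_pderiv_X, smul_zero, sub_zero]
  by_cases h : i = a + l
  · subst h
    rcases Nat.eq_zero_or_pos a with rfl | ha
    · simp
    · simp [show l < a + l by omega]
  · have h' : l < i → i - l ≠ a := by omega
    split_ifs with hl
    · simp [pderiv_X_of_ne (h' hl), pderiv_X_of_ne h]
    · simp [pderiv_X_of_ne h]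

lemma lie_wittDerivation (j l : ℕ) :
    ⁅wittDerivation K j, wittDerivation K l⁆ = ((j : K) - l) • wittDerivation K (j + l) := by
  refine derivation_ext fun i => ?_
  simp only [Derivation.commutator_apply, Derivation.smul_apply, wittDerivation_X]
  by_cases h : j + l < i
  · have e1 : i - l - j = i - (j + l) := by omega
    have e2 : i - j - l = i - (j + l) := by omega
    simp only [h, show l < i by omega, show j < i by omega, show j < i - l by omega,
      show l < i - j by omega, if_true, Derivation.map_smul, wittDerivation_X, e1, e2,
      Nat.cast_sub (show l ≤ i by omega), Nat.cast_sub (show j ≤ i by omega)]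
    module
  · have hj : ¬ j < i - l := by omega
    have hl : ¬ l < i - j := by omega
    split_ifs <;> simp [wittDerivation_X, hj, hl]

lemma scaledPderiv_mul_wittDerivation_sub (a l : ℕ) :
    (scaledPderiv K a : 𝔼) * wittDerivation K l - (wittDerivation K l : 𝔼) * scaledPderiv K a
      = (a : K) • (scaledPderiv K (a + l) : 𝔼) := by
  rw [← Ring.lie_def, ← Derivation.commutator_coe_linear_map, lie_scaledPderiv_wittDerivation,
    Derivation.coe_smul_linearMap]

lemma wittDerivation_mul_wittDerivation_sub (j l : ℕ) :
    (wittDerivation K j : 𝔼) * wittDerivation K l - (wittDerivation K l : 𝔼) * wittDerivation K j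
      = ((j : K) - l) • (wittDerivation K (j + l) : 𝔼) := by
  rw [← Ring.lie_def, ← Derivation.commutator_coe_linear_map, lie_wittDerivation,
    Derivation.coe_smul_linearMap]

lemma commute_constCoeffPart (j l : ℕ) : Commute (constCoeffPart K j) (constCoeffPart K l) := by
  have hα (a b : ℕ) := commute_scaledPderiv (K := K) a b
  unfold constCoeffPart
  refine .add_left (.add_right ?_ (.sum_right _ _ _ fun b _ => ?_))
    (.add_right (.sum_left _ _ _ fun a _ => ?_)
      (.sum_right _ _ _ fun b _ => .sum_left _ _ _ fun a _ => ?_))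
  · exact ((hα _ _).smul_left _).smul_right _
  · exact ((hα _ _).mul_right (hα _ _)).smul_left _
  · exact ((hα _ _).mul_left (hα _ _)).smul_right _
  · exact ((hα _ _).mul_right (hα _ _)).mul_left ((hα _ _).mul_right (hα _ _))

lemma constCoeffPart_mul_wittDerivation_sub (j l : ℕ) :
    constCoeffPart K j * wittDerivation K l - (wittDerivation K l : 𝔼) * constCoeffPart K j
      = (2 * (j : K)) • (scaledPderiv K (j + l) : 𝔼)
        + (2 : K) • ∑ c ∈ range (j + l + 1),
            ((c - l : ℕ) : K) • ((scaledPderiv K c : 𝔼) * scaledPderiv K (j + l - c)) := by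
  have hleibniz (x y z : 𝔼) :
      x * y * z - z * (x * y) = x * (y * z - z * y) + (x * z - z * x) * y := by
    simp only [mul_sub, sub_mul, mul_assoc]
    abel
  have hsplit :
      constCoeffPart K j * wittDerivation K l - (wittDerivation K l : 𝔼) * constCoeffPart K j
        = (2 : K) • ((scaledPderiv K j : 𝔼) * wittDerivation K l
            - (wittDerivation K l : 𝔼) * scaledPderiv K j)
          + ∑ a ∈ range (j + 1),
              ((scaledPderiv K a : 𝔼) * scaledPderiv K (j - a) * wittDerivation K l
                - (wittDerivation K l : 𝔼) * ((scaledPderiv K a : 𝔼) * scaledPderiv K (j - a))) := by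
    simp only [constCoeffPart, add_mul, mul_add, smul_mul_assoc, mul_smul_comm, sum_mul, mul_sum,
      smul_sub, sum_sub_distrib]
    abel
  have hreflect : ∑ a ∈ range (j + 1),
        (scaledPderiv K a : 𝔼) * (((j - a : ℕ) : K) • (scaledPderiv K (j - a + l) : 𝔼))
      = ∑ a ∈ range (j + 1),
          (a : K) • ((scaledPderiv K (a + l) : 𝔼) * scaledPderiv K (j - a)) := by
    rw [← sum_range_reflect]
    refine sum_congr rfl fun a ha => ?_
    have ha : a ≤ j := Nat.lt_succ_iff.1 (mem_range.1 ha)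
    rw [mul_smul_comm, (commute_scaledPderiv _ _).eq]
    simp [Nat.sub_sub_self ha]
  have hshift := sum_range_tsub_smul (K := K) j l
    fun c => (scaledPderiv K c : 𝔼) * scaledPderiv K (j + l - c)
  simp only [Nat.add_sub_add_right] at hshift
  rw [hsplit, hshift]
  simp only [hleibniz, scaledPderiv_mul_wittDerivation_sub, smul_mul_assoc, sum_add_distrib,
    hreflect]
  module

lemma constCoeffPart_wittDerivation_antisymm (j l : ℕ) :
    (constCoeffPart K j * wittDerivation K l - (wittDerivation K l : 𝔼) * constCoeffPart K j)
      - (constCoeffPart K l * wittDerivation K j - (wittDerivation K j : 𝔼) * constCoeffPart K l)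
      = ((j : K) - l) • constCoeffPart K (j + l) := by
  have hcomb := two_smul_sum_tsub_smul_sub (K := K) j l
    (fun c => (scaledPderiv K c : 𝔼) * scaledPderiv K (j + l - c)) fun c hc => by
      simp only [Nat.sub_sub_self hc, (commute_scaledPderiv _ _).eq]
  rw [constCoeffPart_mul_wittDerivation_sub, constCoeffPart_mul_wittDerivation_sub, add_comm l j,
    constCoeffPart]
  linear_combination (norm := module) hcomb

lemma virasoroOp_mul_virasoroOp_sub (c : K) (j l : ℕ) :
    virasoroOp K c j * virasoroOp K c l - virasoroOp K c l * virasoroOp K c j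
      = ((j : K) - l) • virasoroOp K c (j + l) := by
  have hA := (commute_constCoeffPart (K := K) j l).eq
  have hAW := constCoeffPart_wittDerivation_antisymm (K := K) j l
  have hW := wittDerivation_mul_wittDerivation_sub (K := K) j l
  simp only [virasoroOp, add_mul, mul_add, smul_mul_assoc, mul_smul_comm]
  linear_combination (norm := module) c • hAW + hW + (c * c) • hA

lemma constCoeffPart_apply (j : ℕ) (P : MvPolynomial ℕ K) :
    constCoeffPart K j P = (2 * (j : K)) • pderiv j P
      + ∑ a ∈ Ico 1 j, ((a * (j - a) : ℕ) : K) • pderiv (j - a) (pderiv a P) := by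
  have hα (a : ℕ) (Q : MvPolynomial ℕ K) : (scaledPderiv K a : 𝔼) Q = (a : K) • pderiv a Q := rfl
  have hterm (a : ℕ) : ((scaledPderiv K a : 𝔼) * scaledPderiv K (j - a)) P
      = ((a * (j - a) : ℕ) : K) • pderiv (j - a) (pderiv a P) := by
    rw [Module.End.mul_apply, hα, hα, Derivation.map_smul, pderiv_pderiv_comm, smul_smul,
      Nat.cast_mul]
  have hends : ∀ a ∈ range (j + 1), a ∉ Ico 1 j →
      ((a * (j - a) : ℕ) : K) • pderiv (j - a) (pderiv a P) = 0 := by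
    intro a ha hna
    have : a * (j - a) = 0 := by
      simp only [mem_range, mem_Ico, not_and_or, not_le, not_lt] at ha hna
      rcases hna with h | h
      · simp [Nat.lt_one_iff.1 h]
      · simp [Nat.sub_eq_zero_of_le h]
    simp [this]
  rw [sum_subset (fun a ha => mem_range.2 (by simp at ha; omega)) hends]
  simp only [constCoeffPart, LinearMap.add_apply, LinearMap.smul_apply, hα, LinearMap.sum_apply,
    hterm, smul_smul]

lemma finsum_smul_X_mul_pderiv (j : ℕ) (P : MvPolynomial ℕ K) :
    (∑ᶠ k : ℕ, if 1 ≤ k then ((k + j : ℕ) : K) • (X k * pderiv (k + j) P) else 0)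
      = wittDerivation K j P := by
  classical
  let D : ℕ → 𝔻 := fun k =>
    if 1 ≤ k then ((k + j : ℕ) : K) • ((X k : MvPolynomial ℕ K) • (pderiv (k + j) : 𝔻)) else 0
  have hD (k : ℕ) (Q : MvPolynomial ℕ K) :
      D k Q = if 1 ≤ k then ((k + j : ℕ) : K) • (X k * pderiv (k + j) Q) else 0 := by
    unfold D
    split_ifs <;> rfl
  have hsupp : (Function.support fun k => D k P) ⊆ ↑(P.vars.image (· - j)) := by
    intro k hk
    have hvar : k + j ∈ P.vars := by
      by_contra h
      simp [hD, pderiv_eq_zero_of_notMem_vars h] at hk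
    exact mem_image.2 ⟨k + j, hvar, Nat.add_sub_cancel k j⟩
  have hsum (s : Finset ℕ) (Q : MvPolynomial ℕ K) : ∑ k ∈ s, D k Q = (∑ k ∈ s, D k) Q := by
    rw [← Derivation.coeFnAddMonoidHom_apply, map_sum, Finset.sum_apply]
    rfl
  simp only [← hD]
  rw [finsum_eq_sum_of_support_subset _ hsupp, hsum]
  refine derivation_eq_of_forall_mem_vars fun i hi => ?_
  rw [← hsum, sum_eq_single (i - j), hD, wittDerivation_X]
  · by_cases hij : j < i
    · simp [hij, show 1 ≤ i - j by omega, Nat.sub_add_cancel hij.le]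
    · simp [hij, show ¬ 1 ≤ i - j by omega]
  · intro k _ hk
    rw [hD]
    split_ifs
    · rw [pderiv_X_of_ne (by omega : i ≠ k + j), mul_zero, smul_zero]
    · rfl
  · exact fun h => absurd (mem_image_of_mem _ hi) h

lemma virasoroL_eq_virasoroOp (N : ℂ) (j : ℕ) : virasoroL N j = virasoroOp ℂ (1 / N ^ 2) j := by
  ext P : 1
  rw [virasoroOp, LinearMap.add_apply, LinearMap.smul_apply, constCoeffPart_apply,
    Derivation.coeFn_coe, ← finsum_smul_X_mul_pderiv]
  rfl

end Virasoro

theorem virasoro_commutation_general (N : ℂ) (j l : ℕ) (P : MvPolynomial ℕ ℂ) :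
    virasoroL N j (virasoroL N l P) - virasoroL N l (virasoroL N j P)
      = ((j : ℂ) - (l : ℂ)) • virasoroL N (j + l) P := by
  have h := LinearMap.congr_fun (Virasoro.virasoroOp_mul_virasoroOp_sub (1 / N ^ 2) j l) P
  simp only [LinearMap.sub_apply, Module.End.mul_apply, LinearMap.smul_apply] at h
  simpa only [Virasoro.virasoroL_eq_virasoroOp] using h

/-- The discrete Virasoro operators satisfy `[L_j, L_l] = (j - l) L_{j+l}`. -/
theorem virasoro_commutation (N : ℂ) (hN : N ≠ 0) (j l : ℕ) (P : MvPolynomial ℕ ℂ) :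
    virasoroL N j (virasoroL N l P) - virasoroL N l (virasoroL N j P)
      = ((j : ℂ) - (l : ℂ)) • virasoroL N (j + l) P :=
  virasoro_commutation_general N j l P
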